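/- arXiv:1502.00486 — 3 statements merged into one kernel-verified Lean document; each statement's English description precedes it below -/
import Mathlib

section
/- For all integers v > k ≥ 2, the complete k-uniform hypergraph K_v^k on v vertices (whose hyperedges are all k-subsets of the vertex set) is strictly k-balanced. -/
open MeasureTheory Finset Filter

noncomputable section
attribute [local instance] Classical.propDecidable

/-- A `k`-uniform hypergraph: a finite vertex set (of naturals) together with a
set of hyperedges, each of which is a `k`-subset of the vertex set. -/
structure UHypergraph (k : ℕ) where
  verts : Finset ℕ
  edges : Finset (Finset ℕ)
  edge_sub : ∀ e ∈ edges, e ⊆ verts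
  edge_card : ∀ e ∈ edges, e.card = k

namespace UHypergraph

variable {k : ℕ}

/-- `F'` is a subgraph of `F`. -/
def IsSubgraph (F' F : UHypergraph k) : Prop :=
  F'.verts ⊆ F.verts ∧ F'.edges ⊆ F.edges

/-- The degree `d_F(U)` of a vertex set `U`: the number of hyperedges containing `U`. -/
def deg (F : UHypergraph k) (U : Finset ℕ) : ℕ :=
  (F.edges.filter fun e => U ⊆ e).card

/-- The maximum `i`-degree `Δ_i(F)`. -/
def maxDeg (F : UHypergraph k) (i : ℕ) : ℕ :=
  (F.verts.powersetCard i).sup F.deg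

/-- `F` is strictly `k`-balanced. -/
def StrictlyBalanced (F : UHypergraph k) : Prop :=
  k + 1 ≤ F.verts.card ∧
  ∀ F' : UHypergraph k, F'.IsSubgraph F → F' ≠ F → k + 1 ≤ F'.verts.card →
    ((F'.edges.card : ℝ) - 1) / ((F'.verts.card : ℝ) - (k : ℝ)) <
      ((F.edges.card : ℝ) - 1) / ((F.verts.card : ℝ) - (k : ℝ))

/-- `h_i`: the maximum number of edges of a proper subgraph of `F` on `i` vertices. -/
def hsub (F : UHypergraph k) (i : ℕ) : ℕ :=
  sSup {m | ∃ F' : UHypergraph k, F'.IsSubgraph F ∧ F' ≠ F ∧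
    F'.verts.card = i ∧ F'.edges.card = m}

/-- `δ_i := i - k - (h_i - 1)(v-k)/(h-1)`. -/
def deltaI (F : UHypergraph k) (i : ℕ) : ℝ :=
  (i : ℝ) - (k : ℝ) -
    ((F.hsub i : ℝ) - 1) * ((F.verts.card : ℝ) - (k : ℝ)) / ((F.edges.card : ℝ) - 1)

/-- `δ := min_{k+1 ≤ i ≤ v} δ_i`. -/
def deltaMin (F : UHypergraph k) : ℝ :=
  sInf {x | ∃ i : ℕ, k + 1 ≤ i ∧ i ≤ F.verts.card ∧ x = F.deltaI i}

end UHypergraph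

variable {k : ℕ} {V : Type*} [DecidableEq V]

/-- The edge set of the image of `F` under a vertex map `φ`. -/
def copyEdges (F : UHypergraph k) (φ : ℕ → V) : Finset (Finset V) :=
  F.edges.image fun e => e.image φ

/-- `A` is (the edge set of) a copy of `F` inside the edge set `E`. -/
def IsCopy (F : UHypergraph k) (E A : Finset (Finset V)) : Prop :=
  ∃ φ : ℕ → V, Set.InjOn φ F.verts ∧ A = copyEdges F φ ∧ A ⊆ E

/-- `E` contains a copy of `F`. -/
def HasCopy (F : UHypergraph k) (E : Finset (Finset V)) : Prop :=
  ∃ A, IsCopy F E A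

/-- The greedy `F`-free process run on a list of candidate hyperedges: each edge
is added unless it would create a copy of `F`. -/
def greedy (F : UHypergraph k) (L : List (Finset V)) : Finset (Finset V) :=
  L.foldl (fun G e => if HasCopy F (insert e G) then G else insert e G) ∅

/-- An `(r,f)`-cluster (given by the edge sets of its `r` copies of `F`). -/
def IsCluster (F : UHypergraph k) (E : Finset (Finset V)) (f : Finset V) (r : ℕ)
    (c : Fin r → Finset (Finset V)) : Prop :=
  (∀ i, IsCopy F E (c i) ∧ f ∈ c i) ∧
  (∀ i : Fin r, 0 < (i : ℕ) → ∃ g ∈ c i, ∀ j, j < i → g ∉ c j)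

/-- `E` contains an `(r,f)`-cluster. -/
def HasCluster (F : UHypergraph k) (E : Finset (Finset V)) (f : Finset V) (r : ℕ) : Prop :=
  ∃ c : Fin r → Finset (Finset V), IsCluster F E f r c

/-- The number of `(r,f)`-clusters in `E`. -/
def clusterCount (F : UHypergraph k) (E : Finset (Finset V)) (f : Finset V) (r : ℕ) : ℕ :=
  Set.ncard {c : Fin r → Finset (Finset V) | IsCluster F E f r c}

/-- The hyperedges of the complete `k`-uniform hypergraph on `[n] = Fin n`. -/
def kSets (n k : ℕ) : Finset (Finset (Fin n)) :=
  Finset.univ.powersetCard k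

/-- The probability space of independent uniform-`[0,1]` birthtimes on the
(potential) hyperedges of `K_n^k`. -/
def birthμ (n : ℕ) : Measure (Finset (Fin n) → ℝ) :=
  Measure.pi fun _ => volume.restrict (Set.Icc (0 : ℝ) 1)

/-- The binomial random hypergraph `H_{n,p}`: the hyperedges with birthtime at most `p`. -/
def Hnp (n k : ℕ) (p : ℝ) (ω : Finset (Fin n) → ℝ) : Finset (Finset (Fin n)) :=
  (kSets n k).filter fun e => ω e ≤ p

/-- `H_{n,p}^-`: delete from `H_{n,p}` every hyperedge lying in a copy of `F`. -/
def HnpMinus (F : UHypergraph k) (n : ℕ) (p : ℝ) (ω : Finset (Fin n) → ℝ) :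
    Finset (Finset (Fin n)) :=
  (Hnp n k p ω).filter fun e => ¬ ∃ A, IsCopy F (Hnp n k p ω) A ∧ e ∈ A

/-- The greedy `F`-free process `R_{n,p}`: process the hyperedges with birthtime
at most `p` in increasing order of birthtime, adding each unless it creates a copy of `F`. -/
def Rproc (F : UHypergraph k) (n : ℕ) (β : Finset (Fin n) → ℝ) (p : ℝ) :
    Finset (Finset (Fin n)) :=
  greedy F ((((kSets n k).filter fun e => β e ≤ p).toList).mergeSort fun a b => β a ≤ β b)

/-- The maximum `i`-degree of a hypergraph on vertex set `Fin n` given by its edge set. -/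
def hostMaxDeg {n : ℕ} (E : Finset (Finset (Fin n))) (i : ℕ) : ℕ :=
  ((Finset.univ : Finset (Fin n)).powersetCard i).sup fun U =>
    (E.filter fun e => U ⊆ e).card

/-- The edge probability `p := 1/(c₂ (n^{v-k} log n)^{1/(h-1)})`. -/
def pval (c₂ : ℝ) (k v h n : ℕ) : ℝ :=
  1 / (c₂ * (((n : ℝ) ^ ((v : ℝ) - (k : ℝ)) * Real.log n) ^ ((1 : ℝ) / ((h : ℝ) - 1))))

/-- The degree bound `t := c₁ n p (log n)^{3/(d-1)}`. -/
def tval (c₁ c₂ : ℝ) (k v h d n : ℕ) : ℝ :=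
  c₁ * (n : ℝ) * pval c₂ k v h n * Real.log n ^ ((3 : ℝ) / ((d : ℝ) - 1))

/-- The subgraph `F̂` of `F`: all vertices of `F`, and those hyperedges meeting `U`
in at most `k-2` vertices. -/
def hatF (F : UHypergraph k) (U : Finset ℕ) : UHypergraph k where
  verts := F.verts
  edges := F.edges.filter fun e => (e ∩ U).card ≤ k - 2
  edge_sub := fun e he => F.edge_sub e (Finset.mem_filter.mp he).1
  edge_card := fun e he => F.edge_card e (Finset.mem_filter.mp he).1

/-- The neighbourhood `N_F(U)` of `U` in `F`. -/
def nbhd (F : UHypergraph k) (U : Finset ℕ) : Finset ℕ :=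
  F.verts.filter fun x => insert x U ∈ F.edges

/-- `S(H,T,V')`: the set of (edge sets of) copies of `F̂` in the edge set `E` mapping
`u i ↦ v' i`, `N_F(U)` into `T`, and `V(F) \ N_F(U)` outside `T`. -/
def Scopies (F : UHypergraph k) (U : Finset ℕ) (u : Fin (k - 1) → ℕ) {n : ℕ}
    (T : Finset (Fin n)) (v' : Fin (k - 1) → Fin n) (E : Finset (Finset (Fin n))) :
    Set (Finset (Finset (Fin n))) :=
  {A | ∃ φ : ℕ → Fin n, Set.InjOn φ F.verts ∧
    A = copyEdges (hatF F U) φ ∧ A ⊆ E ∧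
    (∀ i, φ (u i) = v' i) ∧
    (∀ x ∈ nbhd F U, φ x ∈ T) ∧
    (∀ x ∈ F.verts, x ∉ nbhd F U → φ x ∉ T)}

/-
Among subgraphs on `m` vertices, the complete one `K_m^k` has the most edges, so it suffices to
compare the densities `(C(m,k) - 1)/(m - k)` of complete hypergraphs, plus the trivial case of a
spanning proper subgraph, which has fewer edges. These densities strictly increase in `m ≥ k + 1`:
passing from `m` to `m + 1` adds `C(m,k-1)` to the numerator and `1` to the denominator, and the
mediant grows because `C(m,k-1) ≥ C(m,k)/(m-k)` exceeds the old density.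
-/

namespace UHypergraph

variable {k : ℕ}

lemma ext_of_verts_edges {F F' : UHypergraph k} (hv : F.verts = F'.verts)
    (he : F.edges = F'.edges) : F = F' := by
  cases F; cases F'; simp_all

lemma card_edges_le_choose (F : UHypergraph k) : #F.edges ≤ (#F.verts).choose k := by
  rw [← card_powersetCard]
  exact card_le_card fun e he => mem_powersetCard.mpr ⟨F.edge_sub e he, F.edge_card e he⟩

lemma IsSubgraph.card_edges_lt {F' F : UHypergraph k} (h : F'.IsSubgraph F) (hne : F' ≠ F)
    (hcard : #F.verts ≤ #F'.verts) : #F'.edges < #F.edges := by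
  have hverts : F'.verts = F.verts := eq_of_subset_of_card_le h.1 hcard
  exact card_lt_card ⟨h.2, fun hsup => hne (ext_of_verts_edges hverts (h.2.antisymm hsup))⟩

end UHypergraph

lemma Nat.choose_le_choose_pred_mul_sub {k m : ℕ} (hk : 2 ≤ k) (hkm : k < m) :
    m.choose k ≤ m.choose (k - 1) * (m - k) := by
  obtain ⟨j, rfl⟩ : ∃ j, k = j + 1 := ⟨k - 1, by omega⟩
  obtain ⟨d, rfl⟩ : ∃ d, m = j + 1 + d := ⟨m - (j + 1), by omega⟩
  refine Nat.le_of_mul_le_mul_right (c := j + 1) ?_ (by omega)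
  rw [Nat.choose_succ_right_eq, Nat.add_sub_cancel, mul_assoc]
  refine Nat.mul_le_mul_left _ ?_
  have hdiff : j + 1 + d - j = d + 1 := by omega
  rw [hdiff, Nat.add_sub_cancel_left]
  nlinarith

def completeDensity (k m : ℕ) : ℝ := ((m.choose k : ℝ) - 1) / ((m : ℝ) - k)

lemma completeDensity_lt_succ {k m : ℕ} (hk : 2 ≤ k) (hkm : k < m) :
    completeDensity k m < completeDensity k (m + 1) := by
  have hpos : (0 : ℝ) < (m : ℝ) - k := sub_pos.mpr (by exact_mod_cast hkm)
  have hchoose : (m.choose k : ℝ) ≤ (m.choose (k - 1) : ℝ) * ((m : ℝ) - k) := by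
    rw [← Nat.cast_sub hkm.le]
    exact_mod_cast Nat.choose_le_choose_pred_mul_sub hk hkm
  have hsucc : ((m + 1).choose k : ℝ) = (m.choose (k - 1) : ℝ) + (m.choose k : ℝ) := by
    obtain ⟨j, rfl⟩ : ∃ j, k = j + 1 := ⟨k - 1, by omega⟩
    exact_mod_cast Nat.choose_succ_succ' m j
  unfold completeDensity
  rw [div_lt_div_iff₀ hpos (by push_cast; linarith), hsucc]
  push_cast
  nlinarith

lemma completeDensity_strictMonoOn {k : ℕ} (hk : 2 ≤ k) :
    StrictMonoOn (completeDensity k) (Set.Ici (k + 1)) :=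
  strictMonoOn_of_lt_add_one Set.ordConnected_Ici fun _ _ hm _ =>
    completeDensity_lt_succ hk hm

/-- Complete k-uniform hypergraphs are strictly k-balanced. -/
theorem stmt_6 (k v : ℕ) (hk : 2 ≤ k) (hv : k < v) (K : UHypergraph k)
    (hverts : K.verts = Finset.range v)
    (hedges : K.edges = (Finset.range v).powersetCard k) :
    K.StrictlyBalanced := by
  have hKverts : #K.verts = v := by rw [hverts, card_range]
  have hKedges : #K.edges = v.choose k := by rw [hedges, card_powersetCard, card_range]
  refine ⟨by omega, fun F' hsub hne hF' => ?_⟩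
  have hpos : (0 : ℝ) < (#F'.verts : ℝ) - k := sub_pos.mpr (by exact_mod_cast hF')
  have hle : #F'.verts ≤ v := hKverts ▸ card_le_card hsub.1
  rw [hKverts, hKedges]
  rcases hle.lt_or_eq with hlt | heq
  · calc ((#F'.edges : ℝ) - 1) / ((#F'.verts : ℝ) - k)
        ≤ completeDensity k #F'.verts := by
          unfold completeDensity
          gcongr
          exact_mod_cast F'.card_edges_le_choose
      _ < completeDensity k v :=
          completeDensity_strictMonoOn hk hF' (Set.mem_Ici.mpr hv) hlt
  · have hfewer := hsub.card_edges_lt hne (by omega)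
    rw [heq] at hpos ⊢
    refine div_lt_div_of_pos_right ?_ hpos
    exact sub_lt_sub_right (by exact_mod_cast hKedges ▸ hfewer) 1
end
end

section
/- Let r ≥ 2 and ℓ ≥ k ≥ 2 be integers, and let F = K^k_{r,…,r} be the balanced complete ℓ-partite k-uniform hypergraph: its vertex set is the disjoint union of ℓ parts of size r, and its hyperedges are exactly those k-sets of vertices containing at most one vertex from each part. Then F is strictly k-balanced. -/
open MeasureTheory Finset Filter

noncomputable section
attribute [local instance] Classical.propDecidable

variable {k : ℕ} {V : Type*} [DecidableEq V]

/-!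
Write `E m` for the largest number of edges spanned by `m` vertices, so that `E k ≤ 1` and
`E v = h`; it suffices that `E` lies strictly below its chord from `k` to `v`.

`E` is convex. Take an extremal `(m+1)`-set `W` and a vertex `y ∉ W`, and pick `x ∈ W` in the
part of `y` if `W` meets that part, arbitrary otherwise. Then `e ↦ e - x + y` injects the edges
of `W` through `x` into the edges of `W + y` through `y`, so removing `x` loses no more edges
than adding `y` gains, and `E m + E (m+2) ≥ 2 E (m+1)`.

Convexity is strict somewhere: the first increment `E (k+1) - E k` is at most `k` (at most `1`
if `ℓ = k`, as then a `(k+1)`-set has two vertices in one part), whereas the last increment is a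
vertex degree `binom(ℓ-1, k-1) r^(k-1) ≥ 2 binom(ℓ-1, k-1)`.
-/

theorem mul_sub_lt_mul_sub_of_convex {R : Type*} [CommRing R] [LinearOrder R]
    [IsStrictOrderedRing R] {E : ℕ → R} {a m b : ℕ} (ham : a < m) (hmb : m < b)
    (hconv : ∀ j, a ≤ j → j + 2 ≤ b → E (j + 1) - E j ≤ E (j + 2) - E (j + 1))
    (hstrict : E (a + 1) - E a < E b - E (b - 1)) :
    ((b : R) - a) * (E m - E a) < ((m : R) - a) * (E b - E a) := by
  set D : ℕ → R := fun j => E (j + 1) - E j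
  have hmono : ∀ i j, a ≤ i → i ≤ j → j < b → D i ≤ D j := by
    intro i j hi hij hjb
    induction j, hij using Nat.le_induction with
    | base => exact le_rfl
    | succ j hij ih => exact (ih (by omega)).trans (hconv j (by omega) (by omega))
  have hleft : E m - E a = ∑ j ∈ Ico a m, D j := (sum_Ico_sub E ham.le).symm
  have hright : E b - E m = ∑ j ∈ Ico m b, D j := (sum_Ico_sub E hmb.le).symm
  have hconst : ∀ p q : ℕ, p ≤ q → ∑ _j ∈ Ico p q, D m = ((q : R) - p) * D m := by
    intro p q hpq
    rw [sum_const, Nat.card_Ico, nsmul_eq_mul, Nat.cast_sub hpq]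
  have hL : E m - E a ≤ ((m : R) - a) * D m := by
    rw [hleft, ← hconst a m ham.le]
    exact sum_le_sum fun j hj => hmono j m (mem_Ico.1 hj).1 (mem_Ico.1 hj).2.le hmb
  have hR : ((b : R) - m) * D m ≤ E b - E m := by
    rw [hright, ← hconst m b hmb.le]
    exact sum_le_sum fun j hj => hmono m j ham.le (mem_Ico.1 hj).1 (mem_Ico.1 hj).2
  -- one of the two bounds is strict, at the increment `D a` or at `D (b - 1)`
  have hstrict' : E m - E a < ((m : R) - a) * D m ∨ ((b : R) - m) * D m < E b - E m := by
    rcases lt_or_ge (D a) (D m) with hlt | hge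
    · left
      rw [hleft, ← hconst a m ham.le]
      exact sum_lt_sum (fun j hj => hmono j m (mem_Ico.1 hj).1 (mem_Ico.1 hj).2.le hmb)
        ⟨a, mem_Ico.2 ⟨le_rfl, ham⟩, hlt⟩
    · right
      have hb : D (b - 1) = E b - E (b - 1) := by
        simp only [D, Nat.sub_add_cancel (by omega : 1 ≤ b)]
      rw [hright, ← hconst m b hmb.le]
      exact sum_lt_sum (fun j hj => hmono m j ham.le (mem_Ico.1 hj).1 (mem_Ico.1 hj).2)
        ⟨b - 1, mem_Ico.2 ⟨by omega, by omega⟩, hge.trans_lt (hb ▸ hstrict)⟩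
  have hma : (0 : R) < (m : R) - a := sub_pos.2 (by exact_mod_cast ham)
  have hbm : (0 : R) < (b : R) - m := sub_pos.2 (by exact_mod_cast hmb)
  have key : ((b : R) - m) * (E m - E a) < ((m : R) - a) * (E b - E m) := by
    rcases hstrict' with h | h
    · calc ((b : R) - m) * (E m - E a) < ((b : R) - m) * (((m : R) - a) * D m) :=
            mul_lt_mul_of_pos_left h hbm
        _ = ((m : R) - a) * (((b : R) - m) * D m) := by ring
        _ ≤ ((m : R) - a) * (E b - E m) := mul_le_mul_of_nonneg_left hR hma.le
    · calc ((b : R) - m) * (E m - E a) ≤ ((b : R) - m) * (((m : R) - a) * D m) :=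
            mul_le_mul_of_nonneg_left hL hbm.le
        _ = ((m : R) - a) * (((b : R) - m) * D m) := by ring
        _ < ((m : R) - a) * (E b - E m) := mul_lt_mul_of_pos_left h hma
  linear_combination key

lemma mul_add_div_of_lt {r c : ℕ} (hc : c < r) (j : ℕ) : (r * j + c) / r = j := by
  rw [Nat.mul_add_div (by omega), Nat.div_eq_of_lt hc, add_zero]

lemma notMem_image_mul_add {r c x : ℕ} (hc : c < r) {S : Finset ℕ} (hS : x / r ∉ S) :
    x ∉ S.image (r * · + c) := by
  rw [mem_image]
  rintro ⟨j, hj, rfl⟩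
  exact hS (by rwa [mul_add_div_of_lt hc])

namespace UHypergraph

lemma ext_of_verts_edges_s7 {F G : UHypergraph k} (hV : F.verts = G.verts)
    (hE : F.edges = G.edges) : F = G := by
  cases F; cases G; cases hV; cases hE; rfl

def edgeCountOn (F : UHypergraph k) (W : Finset ℕ) : ℕ := #{e ∈ F.edges | e ⊆ W}

def degOn (F : UHypergraph k) (W : Finset ℕ) (x : ℕ) : ℕ :=
  #{e ∈ F.edges | e ⊆ W ∧ x ∈ e}

def maxEdgeCount (F : UHypergraph k) (m : ℕ) : ℕ := (F.verts.powersetCard m).sup F.edgeCountOn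

variable {F : UHypergraph k}

lemma edgeCountOn_eq_erase_add_degOn (W : Finset ℕ) (x : ℕ) :
    F.edgeCountOn W = F.edgeCountOn (W.erase x) + F.degOn W x := by
  rw [edgeCountOn, ← card_filter_add_card_filter_not (p := (x ∈ ·)), filter_filter,
    filter_filter, add_comm, edgeCountOn, degOn]
  congr 2
  ext e
  simp only [mem_filter, subset_erase]

lemma degOn_le_choose {W : Finset ℕ} {x : ℕ} (hx : x ∈ W) :
    F.degOn W x ≤ (#W - 1).choose (k - 1) := by
  rw [← card_erase_of_mem hx, ← card_powersetCard]
  refine card_le_card_of_injOn (·.erase x) (fun e he => ?_) (fun e he e' he' h => ?_)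
  · simp only [coe_filter, Set.mem_ofPred_eq] at he
    rw [mem_coe, mem_powersetCard, card_erase_of_mem he.2.2, F.edge_card e he.1]
    exact ⟨erase_subset_erase x he.2.1, rfl⟩
  · simp only [coe_filter, Set.mem_ofPred_eq] at he he'
    rw [← insert_erase he.2.2, ← insert_erase he'.2.2]
    exact congrArg (insert x) h

lemma edgeCountOn_verts : F.edgeCountOn F.verts = #F.edges := by
  rw [edgeCountOn, filter_true_of_mem F.edge_sub]

lemma edgeCountOn_le_maxEdgeCount {W : Finset ℕ} (hW : W ⊆ F.verts) :
    F.edgeCountOn W ≤ F.maxEdgeCount #W :=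
  le_sup (mem_powersetCard.2 ⟨hW, rfl⟩)

lemma exists_edgeCountOn_eq_maxEdgeCount {m : ℕ} (hm : m ≤ #F.verts) :
    ∃ W ⊆ F.verts, #W = m ∧ F.edgeCountOn W = F.maxEdgeCount m := by
  obtain ⟨W, hW, hsup⟩ := exists_mem_eq_sup _ (powersetCard_nonempty.2 hm) F.edgeCountOn
  exact ⟨W, (mem_powersetCard.1 hW).1, (mem_powersetCard.1 hW).2, hsup.symm⟩

lemma maxEdgeCount_card_verts : F.maxEdgeCount #F.verts = #F.edges := by
  rw [maxEdgeCount, powersetCard_self, sup_singleton, edgeCountOn_verts]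

lemma maxEdgeCount_uniformity_le_one : F.maxEdgeCount k ≤ 1 :=
  Finset.sup_le fun W hW => card_le_one.2 fun e he e' he' => by
    rw [mem_powersetCard] at hW
    rw [mem_filter] at he he'
    have h := fun e (he : e ∈ F.edges ∧ e ⊆ W) =>
      eq_of_subset_of_card_le he.2 (by rw [hW.2, F.edge_card e he.1])
    rw [h e he, h e' he']

lemma maxEdgeCount_succ_le_add {m d : ℕ}
    (hd : ∀ W ⊆ F.verts, #W = m + 1 → ∃ x ∈ W, F.degOn W x ≤ d) :
    F.maxEdgeCount (m + 1) ≤ F.maxEdgeCount m + d :=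
  Finset.sup_le fun W hW => by
    obtain ⟨hWV, hWc⟩ := mem_powersetCard.1 hW
    obtain ⟨x, hx, hdx⟩ := hd W hWV hWc
    have hmax := edgeCountOn_le_maxEdgeCount ((erase_subset x W).trans hWV)
    rw [card_erase_of_mem hx, hWc, Nat.add_sub_cancel] at hmax
    rw [edgeCountOn_eq_erase_add_degOn W x]
    omega

lemma maxEdgeCount_pred_add_le {d : ℕ} (hv : 0 < #F.verts)
    (hd : ∀ x ∈ F.verts, d ≤ F.degOn F.verts x) :
    F.maxEdgeCount (#F.verts - 1) + d ≤ #F.edges := by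
  obtain ⟨W, hWV, hWc, hWmax⟩ := exists_edgeCountOn_eq_maxEdgeCount (F := F) (Nat.sub_le _ 1)
  obtain ⟨x, hxV, hxW⟩ :=
    exists_of_ssubset (ssubset_of_subset_of_ne hWV (by rintro rfl; omega))
  have hW : W = F.verts.erase x :=
    eq_of_subset_of_card_le (subset_erase.2 ⟨hWV, hxW⟩) (by rw [card_erase_of_mem hxV, hWc])
  rw [← hWmax, ← edgeCountOn_verts, edgeCountOn_eq_erase_add_degOn F.verts x, ← hW]
  exact Nat.add_le_add_left (hd x hxV) _

lemma two_mul_maxEdgeCount_succ_le {m : ℕ} (hm : m + 1 ≤ #F.verts)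
    (hstep : ∀ W ⊆ F.verts, #W = m + 1 →
      ∃ x ∈ W, ∃ y ∈ F.verts, y ∉ W ∧ F.degOn W x ≤ F.degOn (insert y W) y) :
    2 * F.maxEdgeCount (m + 1) ≤ F.maxEdgeCount m + F.maxEdgeCount (m + 2) := by
  obtain ⟨W, hWV, hWc, hWmax⟩ := exists_edgeCountOn_eq_maxEdgeCount hm
  obtain ⟨x, hx, y, hy, hyW, hxy⟩ := hstep W hWV hWc
  have hdown := edgeCountOn_le_maxEdgeCount ((erase_subset x W).trans hWV)
  have hup := edgeCountOn_le_maxEdgeCount (insert_subset hy hWV)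
  rw [card_erase_of_mem hx, hWc, Nat.add_sub_cancel] at hdown
  rw [card_insert_of_notMem hyW, hWc] at hup
  change F.edgeCountOn (insert y W) ≤ F.maxEdgeCount (m + 2) at hup
  have hinsert := edgeCountOn_eq_erase_add_degOn (F := F) (insert y W) y
  rw [erase_insert hyW] at hinsert
  have herase := edgeCountOn_eq_erase_add_degOn (F := F) W x
  omega

lemma strictlyBalanced_of_lt_chord (hv : k + 1 ≤ #F.verts)
    (hchord : ∀ m, k < m → m < #F.verts →
      ((#F.verts : ℝ) - k) * (F.maxEdgeCount m - F.maxEdgeCount k) <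
        ((m : ℝ) - k) * (#F.edges - F.maxEdgeCount k)) :
    F.StrictlyBalanced := by
  refine ⟨hv, fun F' hsub hne hm => ?_⟩
  have hmv : #F'.verts ≤ #F.verts := card_le_card hsub.1
  have hpos : ∀ n : ℕ, k + 1 ≤ n → (0 : ℝ) < n - k := fun n hn => by
    rw [sub_pos]; exact_mod_cast hn
  rw [div_lt_div_iff₀ (hpos _ hm) (hpos _ hv)]
  rcases hmv.eq_or_lt with hmv | hmv
  · have hV : F'.verts = F.verts := eq_of_subset_of_card_le hsub.1 hmv.ge
    have hE : #F'.edges < #F.edges :=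
      card_lt_card (ssubset_of_subset_of_ne hsub.2 fun hE => hne (ext_of_verts_edges_s7 hV hE))
    rw [hmv]
    have : (#F'.edges : ℝ) < #F.edges := by exact_mod_cast hE
    nlinarith [hpos _ hv]
  · have hE' : (#F'.edges : ℝ) ≤ F.maxEdgeCount #F'.verts := by
      refine Nat.cast_le.2 ((card_le_card fun e he => ?_).trans
        (edgeCountOn_le_maxEdgeCount hsub.1))
      exact mem_filter.2 ⟨hsub.2 he, F'.edge_sub e he⟩
    have hk1 : (F.maxEdgeCount k : ℝ) ≤ 1 := by exact_mod_cast maxEdgeCount_uniformity_le_one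
    have hvm : (#F'.verts : ℝ) < #F.verts := by exact_mod_cast hmv
    nlinarith [hchord _ hm hmv, hpos _ hm, hpos _ hv]

def completeMultipartite (k ℓ r : ℕ) : UHypergraph k where
  verts := range (ℓ * r)
  edges := ((range (ℓ * r)).powersetCard k).filter
    (fun e => ∀ x ∈ e, ∀ y ∈ e, x / r = y / r → x = y)
  edge_sub _ he := (mem_powersetCard.1 (mem_filter.1 he).1).1
  edge_card _ he := (mem_powersetCard.1 (mem_filter.1 he).1).2

namespace completeMultipartite

variable {ℓ r : ℕ}

lemma mem_edges {e : Finset ℕ} :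
    e ∈ (completeMultipartite k ℓ r).edges ↔
      (e ⊆ range (ℓ * r) ∧ #e = k) ∧ ∀ x ∈ e, ∀ y ∈ e, x / r = y / r → x = y := by
  simp only [completeMultipartite, mem_filter, mem_powersetCard]

lemma card_verts : #(completeMultipartite k ℓ r).verts = ℓ * r := card_range _

lemma degOn_le_degOn_insert {W : Finset ℕ} {x y : ℕ} (hy : y ∈ range (ℓ * r))
    (hyW : y ∉ W) (hpart : ∀ w ∈ W, w / r = y / r → w / r = x / r) :
    (completeMultipartite k ℓ r).degOn W x ≤
      (completeMultipartite k ℓ r).degOn (insert y W) y := by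
  refine card_le_card_of_injOn (fun e => insert y (e.erase x)) (fun e he => ?_)
    (fun e he e' he' h => ?_)
  · simp only [coe_filter, Set.mem_ofPred_eq, mem_edges] at he
    obtain ⟨⟨⟨heV, hek⟩, hinj⟩, heW, hxe⟩ := he
    have hye : y ∉ e.erase x := fun h => hyW (heW (mem_of_mem_erase h))
    have hnew : ∀ b ∈ e.erase x, b / r ≠ y / r := fun b hb hby =>
      (ne_of_mem_erase hb) (hinj b (mem_of_mem_erase hb) x hxe
        (hpart b (heW (mem_of_mem_erase hb)) hby))
    simp only [coe_filter, Set.mem_ofPred_eq, mem_edges]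
    refine ⟨⟨⟨insert_subset hy ((erase_subset x e).trans heV), ?_⟩, ?_⟩,
      insert_subset_insert y ((erase_subset x e).trans heW), mem_insert_self y _⟩
    · rw [card_insert_of_notMem hye, card_erase_add_one hxe, hek]
    · intro a ha b hb hab
      rcases mem_insert.1 ha with rfl | ha' <;> rcases mem_insert.1 hb with rfl | hb'
      · rfl
      · exact absurd hab.symm (hnew b hb')
      · exact absurd hab (hnew a ha')
      · exact hinj a (mem_of_mem_erase ha') b (mem_of_mem_erase hb') hab
  · simp only [coe_filter, Set.mem_ofPred_eq] at he he'
    have hyW' : ∀ e : Finset ℕ, e ⊆ W → y ∉ e.erase x := fun e heW h =>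
      hyW (heW (mem_of_mem_erase h))
    have h' := congrArg (·.erase y) h
    simp only [erase_insert (hyW' e he.2.1), erase_insert (hyW' e' he'.2.1)] at h'
    rw [← insert_erase he.2.2, ← insert_erase he'.2.2, h']

lemma exists_degOn_le_degOn_insert {W : Finset ℕ} (hW : W ⊆ range (ℓ * r)) (hne : W.Nonempty)
    (hlt : #W < ℓ * r) :
    ∃ x ∈ W, ∃ y ∈ (completeMultipartite k ℓ r).verts, y ∉ W ∧
      (completeMultipartite k ℓ r).degOn W x ≤
        (completeMultipartite k ℓ r).degOn (insert y W) y := by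
  by_cases hshared : ∃ y ∈ range (ℓ * r), y ∉ W ∧ ∃ x ∈ W, y / r = x / r
  · obtain ⟨y, hy, hyW, x, hx, hxy⟩ := hshared
    exact ⟨x, hx, y, hy, hyW, degOn_le_degOn_insert hy hyW fun w _ hw => hw.trans hxy⟩
  · push Not at hshared
    obtain ⟨x, hx⟩ := hne
    obtain ⟨y, hy, hyW⟩ := exists_of_ssubset (ssubset_of_subset_of_ne hW
      (by rintro rfl; rw [card_range] at hlt; omega))
    exact ⟨x, hx, y, hy, hyW, degOn_le_degOn_insert hy hyW fun w hw hwy =>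
      absurd hwy.symm (hshared y hy hyW w hw)⟩

lemma two_mul_maxEdgeCount_le {m : ℕ} (hm : m + 2 ≤ ℓ * r) :
    2 * (completeMultipartite k ℓ r).maxEdgeCount (m + 1) ≤
      (completeMultipartite k ℓ r).maxEdgeCount m +
        (completeMultipartite k ℓ r).maxEdgeCount (m + 2) :=
  two_mul_maxEdgeCount_succ_le (by rw [card_verts]; omega)
    fun W hW hc => exists_degOn_le_degOn_insert hW (card_pos.1 (by omega)) (by omega)

lemma exists_degOn_le_one (hr : 0 < r) {W : Finset ℕ} (hW : W ⊆ range (k * r))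
    (hc : #W = k + 1) : ∃ x ∈ W, (completeMultipartite k k r).degOn W x ≤ 1 := by
  obtain ⟨x, hx, x', hx', hne, hpart⟩ := exists_ne_map_eq_of_card_lt_of_maps_to
    (t := range k) (f := (· / r)) (by rw [hc, card_range]; omega)
    fun w hw => mem_range.2 ((Nat.div_lt_iff_lt_mul hr).2 (mem_range.1 (hW hw)))
  -- an edge through `x` avoids `x'`, so it can only be `W.erase x'`
  refine ⟨x, hx, card_le_one.2 fun e he e' he' => ?_⟩
  have hunique : ∀ e ∈ {e ∈ (completeMultipartite k k r).edges | e ⊆ W ∧ x ∈ e},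
      e = W.erase x' := fun e he => by
    rw [mem_filter, mem_edges] at he
    obtain ⟨⟨⟨-, hek⟩, hinj⟩, heW, hxe⟩ := he
    refine eq_of_subset_of_card_le
      (subset_erase.2 ⟨heW, fun hx'e => hne (hinj x hxe x' hx'e hpart)⟩) ?_
    rw [card_erase_of_mem hx', hc, hek, Nat.add_sub_cancel]
  rw [hunique e he, hunique e' he']

lemma insert_image_mem_edges (hk : 1 ≤ k) {c : ℕ} (hc : c < r) {x : ℕ}
    (hx : x ∈ range (ℓ * r)) {S : Finset ℕ} (hS : S ⊆ (range ℓ).erase (x / r))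
    (hSc : #S = k - 1) :
    insert x (S.image (r * · + c)) ∈ (completeMultipartite k ℓ r).edges := by
  have hxS : x ∉ S.image (r * · + c) :=
    notMem_image_mul_add hc fun h => (mem_erase.1 (hS h)).1 rfl
  rw [mem_edges]
  refine ⟨⟨insert_subset hx fun y hy => ?_, ?_⟩, fun a ha b hb hab => ?_⟩
  · obtain ⟨j, hj, rfl⟩ := mem_image.1 hy
    have hjℓ : j + 1 ≤ ℓ := mem_range.1 (mem_of_mem_erase (hS hj))
    rw [mem_range]
    nlinarith
  · rw [card_insert_of_notMem hxS, card_image_of_injective _ fun j j' h => ?_, hSc]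
    · omega
    · simpa [mul_add_div_of_lt hc] using congrArg (· / r) h
  · rcases mem_insert.1 ha with rfl | ha' <;> rcases mem_insert.1 hb with rfl | hb'
    · rfl
    · obtain ⟨j, hj, rfl⟩ := mem_image.1 hb'
      exact absurd (hab.trans (mul_add_div_of_lt hc j)) fun h => (mem_erase.1 (hS hj)).1 h.symm
    · obtain ⟨j, hj, rfl⟩ := mem_image.1 ha'
      exact absurd ((mul_add_div_of_lt hc j).symm.trans hab) (mem_erase.1 (hS hj)).1
    · obtain ⟨j, -, rfl⟩ := mem_image.1 ha'
      obtain ⟨j', -, rfl⟩ := mem_image.1 hb'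
      rw [mul_add_div_of_lt hc, mul_add_div_of_lt hc] at hab
      rw [hab]

lemma two_mul_choose_le_degOn (hk : 2 ≤ k) (hr : 2 ≤ r) {x : ℕ} (hx : x ∈ range (ℓ * r)) :
    2 * (ℓ - 1).choose (k - 1) ≤
      (completeMultipartite k ℓ r).degOn (completeMultipartite k ℓ r).verts x := by
  have hxℓ : x / r ∈ range ℓ :=
    mem_range.2 ((Nat.div_lt_iff_lt_mul (by omega)).2 (mem_range.1 hx))
  -- the edges through `x` whose other vertices all sit at position `c ∈ {0, 1}` of their parts
  calc 2 * (ℓ - 1).choose (k - 1)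
      = #(((range ℓ).erase (x / r)).powersetCard (k - 1) ×ˢ range 2) := by
        rw [card_product, card_powersetCard, card_erase_of_mem hxℓ, card_range, card_range,
          mul_comm]
    _ ≤ _ := by
      refine card_le_card_of_injOn (fun p => insert x (p.1.image (r * · + p.2)))
        (fun p hp => ?_) (fun p hp p' hp' h => ?_)
      · simp only [coe_product, Set.mem_prod, mem_coe, mem_powersetCard, mem_range] at hp
        have hedge := insert_image_mem_edges (by omega) (show p.2 < r by omega) hx
          hp.1.1 hp.1.2
        simp only [coe_filter, Set.mem_ofPred_eq]
        exact ⟨hedge, (completeMultipartite k ℓ r).edge_sub _ hedge, mem_insert_self _ _⟩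
      · obtain ⟨S, c⟩ := p
        obtain ⟨S', c'⟩ := p'
        simp only [coe_product, Set.mem_prod, mem_coe, mem_powersetCard, mem_range] at hp hp' h
        have hnot : ∀ T, T ⊆ (range ℓ).erase (x / r) → x / r ∉ T :=
          fun T hT h => (mem_erase.1 (hT h)).1 rfl
        have himage : S.image (r * · + c) = S'.image (r * · + c') := by
          simpa [erase_insert (notMem_image_mul_add (show c < r by omega) (hnot S hp.1.1)),
            erase_insert (notMem_image_mul_add (show c' < r by omega) (hnot S' hp'.1.1))]
            using congrArg (·.erase x) h
        have hS : S = S' := by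
          simpa [image_image, Function.comp_def, mul_add_div_of_lt (show c < r by omega),
            mul_add_div_of_lt (show c' < r by omega)] using congrArg (·.image (· / r)) himage
        subst hS
        obtain ⟨j, hj⟩ := card_pos.1 (show 0 < #S by omega)
        obtain ⟨j', -, hj'⟩ := mem_image.1 (himage ▸ mem_image_of_mem (r * · + c) hj)
        have hmod := congrArg (· % r) hj'
        simp only [Nat.mul_add_mod, Nat.mod_eq_of_lt (show c < r by omega),
          Nat.mod_eq_of_lt (show c' < r by omega)] at hmod
        rw [hmod]

lemma maxEdgeCount_succ_add_lt (hk : 2 ≤ k) (hkℓ : k ≤ ℓ) (hr : 2 ≤ r) :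
    (completeMultipartite k ℓ r).maxEdgeCount (k + 1) +
        (completeMultipartite k ℓ r).maxEdgeCount (ℓ * r - 1) <
      (completeMultipartite k ℓ r).maxEdgeCount k + #(completeMultipartite k ℓ r).edges := by
  have htop := maxEdgeCount_pred_add_le (F := completeMultipartite k ℓ r)
    (by rw [card_verts]; nlinarith) fun x hx => two_mul_choose_le_degOn hk hr hx
  rw [card_verts] at htop
  rcases hkℓ.eq_or_lt with rfl | hlt
  · have hbot := maxEdgeCount_succ_le_add (F := completeMultipartite k k r) (d := 1)
      fun W hW hc => exists_degOn_le_one (by omega) hW hc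
    rw [Nat.choose_self] at htop
    omega
  · have hbot := maxEdgeCount_succ_le_add (F := completeMultipartite k ℓ r) (d := k)
      fun W _ hc => by
        obtain ⟨x, hx⟩ := card_pos.1 (show 0 < #W by omega)
        refine ⟨x, hx, (degOn_le_choose hx).trans_eq ?_⟩
        rw [hc, Nat.add_sub_cancel, Nat.choose_symm (by omega), Nat.choose_one_right]
    have hchoose : k ≤ (ℓ - 1).choose (k - 1) := by
      calc k = k.choose (k - 1) := by rw [Nat.choose_symm (by omega), Nat.choose_one_right]
        _ ≤ (ℓ - 1).choose (k - 1) := Nat.choose_le_choose _ (by omega)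
    omega

lemma maxEdgeCount_lt_chord (hk : 2 ≤ k) (hkℓ : k ≤ ℓ) (hr : 2 ≤ r) {m : ℕ}
    (hkm : k < m) (hmv : m < ℓ * r) :
    (((ℓ * r : ℕ) : ℝ) - k) * ((completeMultipartite k ℓ r).maxEdgeCount m -
        (completeMultipartite k ℓ r).maxEdgeCount k) <
      ((m : ℝ) - k) * (#(completeMultipartite k ℓ r).edges -
        (completeMultipartite k ℓ r).maxEdgeCount k) := by
  have htop : (completeMultipartite k ℓ r).maxEdgeCount (ℓ * r) =
      #(completeMultipartite k ℓ r).edges := card_verts (k := k) ▸ maxEdgeCount_card_verts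
  rw [← htop]
  refine mul_sub_lt_mul_sub_of_convex
    (E := fun m => ((completeMultipartite k ℓ r).maxEdgeCount m : ℝ)) hkm hmv
    (fun j _ hj => ?_) ?_
  · have := (Nat.cast_le (α := ℝ)).2 (two_mul_maxEdgeCount_le (k := k) hj)
    push_cast at this
    linarith
  · have := (Nat.cast_lt (α := ℝ)).2 (maxEdgeCount_succ_add_lt hk hkℓ hr)
    rw [← htop] at this
    push_cast at this
    linarith

end completeMultipartite

end UHypergraph

/-- Balanced complete ℓ-partite k-uniform hypergraphs are
strictly k-balanced. The parts are `{j*r, …, j*r + r - 1}` for `j < ℓ`, i.e. the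
part of a vertex `x` is `x / r`; a k-set is a hyperedge iff it has at most one
vertex in each part. -/
theorem stmt_7 (k ℓ r : ℕ) (hk : 2 ≤ k) (hℓ : k ≤ ℓ) (hr : 2 ≤ r) (F : UHypergraph k)
    (hverts : F.verts = Finset.range (ℓ * r))
    (hedges : F.edges = ((Finset.range (ℓ * r)).powersetCard k).filter
      (fun e => ∀ x ∈ e, ∀ y ∈ e, x / r = y / r → x = y)) :
    F.StrictlyBalanced := by
  obtain rfl : F = UHypergraph.completeMultipartite k ℓ r :=
    -- the two `filter`s differ only in their decidability instances
    UHypergraph.ext_of_verts_edges_s7 hverts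
      (by rw [hedges, UHypergraph.completeMultipartite]; congr!)
  have hv := UHypergraph.completeMultipartite.card_verts (k := k) (ℓ := ℓ) (r := r)
  refine UHypergraph.strictlyBalanced_of_lt_chord (by rw [hv]; nlinarith) fun m hkm hmv => ?_
  rw [hv] at hmv ⊢
  exact UHypergraph.completeMultipartite.maxEdgeCount_lt_chord hk hℓ hr hkm hmv
end
end

section
/- Let k ≥ 2, let F be a k-uniform hypergraph with h hyperedges, let F̂ be a subgraph of F, and let r ∈ ℕ with r ≥ 1. Let H be a k-uniform hypergraph containing no (r, f)-cluster for any hyperedge f of H. Let (α_1, F_1), …, (α_m, F_m) be pairs such that the α_i are pairwise distinct and pairwise hyperedge-disjoint copies of F̂ in H, each F_i is a copy of F in H, and α_i and F_i share at least one hyperedge, for every i. Then for every hyperedge f of H, the number of indices i with f ∈ E(α_i) ∪ E(F_i) is at most h·r. -/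
/-!
Since the `α i` are pairwise disjoint, `f` lies in at most one of them, and the edges
`e i ∈ α i ∩ F_i` are pairwise distinct. Choose greedily copies `F_i` containing `f` whose
representative `e i` avoids the at most `h` edges of each copy chosen before; this is
possible `r` times as soon as more than `h (r - 1)` copies `F_i` contain `f`, and yields
an `(r, f)`-cluster.
-/

open MeasureTheory Finset Filter

noncomputable section
attribute [local instance] Classical.propDecidable

variable {k : ℕ} {V : Type*} [DecidableEq V]

theorem IsCopy.card_le {F : UHypergraph k} {E A : Finset (Finset V)} (hA : IsCopy F E A) :
    A.card ≤ F.edges.card := by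
  obtain ⟨φ, -, rfl, -⟩ := hA
  exact card_image_le

theorem card_filter_mem_le_one_of_pairwise_disjoint {ι β : Type*} [DecidableEq β]
    {α : ι → Finset β} (hα : Pairwise fun i j => Disjoint (α i) (α j)) (s : Finset ι)
    (x : β) :
    (s.filter fun i => x ∈ α i).card ≤ 1 :=
  card_le_one.2 fun _ hi _ hj =>
    hα.eq (not_disjoint_iff.2 ⟨x, (mem_filter.1 hi).2, (mem_filter.1 hj).2⟩)

/-- The sets chosen first cover at most `(n + 1) * b` representatives, so while this is
below `|S|` some further index has its representative outside all of them. -/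
theorem exists_seq_rep_not_mem_of_mul_lt_card {ι α : Type*} [DecidableEq α]
    (A : ι → Finset α) (e : ι → α) (S : Finset ι) (he : Set.InjOn e S) {b : ℕ}
    (hA : ∀ i ∈ S, (A i).card ≤ b) :
    ∀ n : ℕ, n * b < S.card →
      ∃ c : Fin (n + 1) → ι, (∀ j, c j ∈ S) ∧ ∀ j j', j' < j → e (c j) ∉ A (c j')
  | 0, hS => by
    obtain ⟨i, hi⟩ : S.Nonempty := card_pos.1 (by simpa using hS)
    exact ⟨fun _ => i, fun _ => hi, fun j j' h => absurd (Fin.lt_def.1 h) (by omega)⟩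
  | n + 1, hS => by
    obtain ⟨c, hcS, hc⟩ := exists_seq_rep_not_mem_of_mul_lt_card A e S he hA n
      (lt_of_le_of_lt (Nat.mul_le_mul_right b n.le_succ) hS)
    set U := univ.biUnion fun j => A (c j)
    have hU : U.card ≤ (n + 1) * b := card_biUnion_le.trans <|
      (sum_le_sum fun j _ => hA (c j) (hcS j)).trans_eq (by simp)
    have hcovered : (S.filter fun i => e i ∈ U).card ≤ U.card :=
      card_le_card_of_injOn e (fun i hi => (mem_filter.1 hi).2) (he.mono (filter_subset _ _))
    obtain ⟨i, hiS, hiU⟩ : ∃ i ∈ S, e i ∉ U := by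
      by_contra! h
      rw [filter_true_of_mem h] at hcovered
      omega
    refine ⟨Fin.snoc c i, Fin.lastCases (by simpa) (by simpa), fun j j' hj => ?_⟩
    induction j using Fin.lastCases with
    | last =>
      obtain ⟨j', rfl⟩ := Fin.exists_castSucc_eq.2 (Fin.ne_last_of_lt hj)
      simp only [Fin.snoc_last, Fin.snoc_castSucc]
      exact fun h => hiU (mem_biUnion.2 ⟨j', mem_univ _, h⟩)
    | cast j =>
      obtain ⟨j', rfl⟩ :=
        Fin.exists_castSucc_eq.2 (Fin.ne_last_of_lt (hj.trans (Fin.castSucc_lt_last j)))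
      simpa using hc j j' (Fin.castSucc_lt_castSucc_iff.1 hj)

theorem hasCluster_of_mul_lt_card {ι : Type*} {F : UHypergraph k} {E : Finset (Finset V)}
    {f : Finset V} (A : ι → Finset (Finset V)) (e : ι → Finset V) (S : Finset ι)
    (hA : ∀ i ∈ S, IsCopy F E (A i) ∧ f ∈ A i) (heA : ∀ i ∈ S, e i ∈ A i)
    (he : Set.InjOn e S) {n : ℕ} (hS : n * F.edges.card < S.card) : HasCluster F E f (n + 1) := by
  obtain ⟨c, hcS, hc⟩ := exists_seq_rep_not_mem_of_mul_lt_card A e S he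
    (fun i hi => (hA i hi).1.card_le) n hS
  exact ⟨fun j => A (c j), fun j => hA (c j) (hcS j),
    fun j _ => ⟨e (c j), heA (c j) (hcS j), fun j' hj' => hc j j' hj'⟩⟩

theorem stmt_17_general {V : Type*} [DecidableEq V] (k : ℕ)
    (F : UHypergraph k)
    (r : ℕ) (hr : 1 ≤ r)
    (E : Finset (Finset V))
    (hnocluster : ∀ f ∈ E, ¬ HasCluster F E f r)
    (m : ℕ) (α Fi : Fin m → Finset (Finset V))
    (hαdisj : ∀ i j, i ≠ j → Disjoint (α i) (α j))
    (hFi : ∀ i, IsCopy F E (Fi i))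
    (hshare : ∀ i, (α i ∩ Fi i).Nonempty) :
    ∀ f ∈ E, (Finset.univ.filter fun i => f ∈ α i ∪ Fi i).card ≤ F.edges.card * r := by
  intro f hf
  obtain ⟨n, rfl⟩ := Nat.exists_eq_add_of_le' hr
  choose e he using hshare
  have heα i : e i ∈ α i := (mem_inter.1 (he i)).1
  have heF i : e i ∈ Fi i := (mem_inter.1 (he i)).2
  have hdisj : Pairwise fun i j => Disjoint (α i) (α j) := fun i j => hαdisj i j
  have he_inj : Function.Injective e := fun i j hij =>
    hdisj.eq (not_disjoint_iff.2 ⟨e i, heα i, hij ▸ heα j⟩)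
  set S := univ.filter fun i => f ∈ Fi i
  have hcard : (univ.filter fun i => f ∈ α i ∪ Fi i).card ≤ 1 + S.card := by
    calc _ ≤ (univ.filter fun i => f ∈ α i).card + S.card :=
          (card_le_card fun i hi => by simpa [S] using hi).trans (card_union_le _ _)
      _ ≤ 1 + S.card := by
          grw [card_filter_mem_le_one_of_pairwise_disjoint hdisj]
  by_contra! hlt
  obtain ⟨i, -⟩ := card_pos.1 (Nat.zero_lt_of_lt hlt)
  have hF : 0 < F.edges.card := (card_pos.2 ⟨e i, heF i⟩).trans_le (hFi i).card_le
  refine hnocluster f hf (hasCluster_of_mul_lt_card Fi e S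
    (fun i hi => ⟨hFi i, (mem_filter.1 hi).2⟩) (fun i _ => heF i) he_inj.injOn ?_)
  rw [Nat.mul_succ, Nat.mul_comm] at hlt
  omega

/-- the bound on Δ(G) in Lemma 3.2. -/
theorem stmt_17 {V : Type*} [DecidableEq V] (k : ℕ) (hk : 2 ≤ k)
    (F Fhat : UHypergraph k) (hFhat : Fhat.IsSubgraph F)
    (r : ℕ) (hr : 1 ≤ r)
    (E : Finset (Finset V)) (hunif : ∀ e ∈ E, e.card = k)
    (hnocluster : ∀ f ∈ E, ¬ HasCluster F E f r)
    (m : ℕ) (α Fi : Fin m → Finset (Finset V))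
    (hαinj : Function.Injective α)
    (hαdisj : ∀ i j, i ≠ j → Disjoint (α i) (α j))
    (hα : ∀ i, IsCopy Fhat E (α i))
    (hFi : ∀ i, IsCopy F E (Fi i))
    (hshare : ∀ i, (α i ∩ Fi i).Nonempty) :
    ∀ f ∈ E, (Finset.univ.filter fun i => f ∈ α i ∪ Fi i).card ≤ F.edges.card * r :=
  stmt_17_general k F r hr E hnocluster m α Fi hαdisj hFi hshare
end
end
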